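/- For all n > 1, 2·(sum over j from 0 to n−2 of f(j)·f(j+2)) − f(n−2)·f(n−1) = f(n)^2 − 1, where f is the shifted Fibonacci sequence with f(0)=f(1)=1. -/
import Mathlib


def f : ℕ → ℕ
  | 0 => 1
  | 1 => 1
  | n + 2 => f (n + 1) + f n

lemma aux (m : ℕ) :
    2 * (∑ j ∈ Finset.range (m + 1), f j * f (j + 2)) + 1
      = f (m + 2) ^ 2 + f m * f (m + 1) := by
  induction m with
  | zero => simp [f]
  | succ k ih =>
      rw [Finset.sum_range_succ, Nat.mul_add]
      have h1 : f (k + 3) = f (k + 2) + f (k + 1) := rfl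
      have h2 : f (k + 2) = f (k + 1) + f k := rfl
      rw [show k+1+2 = k+3 from rfl, show k+1+1 = k+2 from rfl, h1, h2]
      rw [h2] at ih
      zify at ih ⊢
      linear_combination ih

theorem stmt4 (n : ℕ) (hn : 1 < n) :
    2 * (∑ j ∈ Finset.range (n - 1), f j * f (j + 2)) - f (n - 2) * f (n - 1)
      = (f n) ^ 2 - 1 := by
  obtain ⟨m, rfl⟩ : ∃ m, n = m + 2 := ⟨n - 2, by omega⟩
  have := aux m
  simp only [Nat.add_sub_cancel, show m + 2 - 1 = m + 1 from rfl] at *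
  omega
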